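/- arXiv:1511.05727 — 3 statements merged into one kernel-verified Lean document; each statement's English description precedes it below -/
import Mathlib

section
/- There exists a constant η₀ ∈ (0, a₊ − a₀) such that for every η ∈ (0, η₀) and every κ > 0 there is a constant C > 0 (depending only on κ and f) with the following property: for all sufficiently small ε > 0 and every ξ ∈ [a₊ − η, a₊ − ε^κ], one has Y(C·|log ε|, ξ) ≥ a₊ − ε^κ. -/
/-!
Since `f a₊ = 0` and `f'(a₊) = -p < 0`, near `a₊` (from below) `f u > (p/2)(a₊ - u)`. Hence
`a₊ - η e^{-(p/2)τ}` is a lower barrier for any solution started above `a₊ - η`: wherever the two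
meet, the solution moves up strictly faster. At time `τ = (2κ/p)|log ε|` the barrier equals
`a₊ - η ε^κ ≥ a₊ - ε^κ`.
-/

open Set Filter Topology Real

theorem eventually_mul_sub_lt_of_hasDerivAt {f : ℝ → ℝ} {a p m : ℝ} (hf : HasDerivAt f (-p) a)
    (ha : f a = 0) (hm : m < p) : ∀ᶠ u in 𝓝[<] a, m * (a - u) < f u := by
  have hslope : ∀ᶠ u in 𝓝[<] a, slope f a u < -m :=
    ((hasDerivAt_iff_tendsto_slope.1 hf).eventually (eventually_lt_nhds (by linarith))).filter_mono
      (nhdsWithin_mono a fun u hu => ne_of_lt hu)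
  filter_upwards [hslope, self_mem_nhdsWithin] with u hu hua
  have hua : u - a < 0 := sub_neg.2 hua
  rw [slope_def_field, ha, sub_zero, div_lt_iff_of_neg hua] at hu
  linarith

theorem sub_mul_exp_le_of_hasDerivAt {F y : ℝ → ℝ} {a η m : ℝ} (hη : 0 < η) (hm : 0 ≤ m)
    (hF : ∀ u ∈ Ico (a - η) a, m * (a - u) < F u)
    (hy : ∀ τ ≥ (0 : ℝ), HasDerivAt y (F (y τ)) τ) (hy0 : a - η ≤ y 0) {τ : ℝ} (hτ : 0 ≤ τ) :
    a - η * exp (-(m * τ)) ≤ y τ := by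
  have hbarrier : ∀ s, HasDerivAt (fun s => a - η * exp (-(m * s))) (η * (exp (-(m * s)) * m)) s :=
    fun s => by
      simpa using (((hasDerivAt_id s).const_mul m).neg.exp.const_mul η).const_sub a
  refine image_le_of_deriv_right_lt_deriv_boundary' (a := 0) (b := τ)
    (fun s _ => (hbarrier s).continuousAt.continuousWithinAt)
    (fun s _ => (hbarrier s).hasDerivWithinAt) (by simpa using hy0)
    (fun s hs => (hy s hs.1).continuousAt.continuousWithinAt)
    (fun s hs => (hy s hs.1).hasDerivWithinAt) (fun s hs hmeet => ?_) ⟨hτ, le_rfl⟩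
  have hexp_pos : 0 < exp (-(m * s)) := exp_pos _
  have hexp_le : exp (-(m * s)) ≤ 1 := exp_le_one_iff.2 (neg_nonpos.2 (mul_nonneg hm hs.1))
  have hmem : y s ∈ Ico (a - η) a := by
    rw [← hmeet]
    constructor <;> nlinarith
  have hlin := hF _ hmem
  rw [← hmeet] at hlin ⊢
  linarith

theorem exp_neg_mul_abs_log {ε : ℝ} (hε₀ : 0 < ε) (hε₁ : ε < 1) (κ : ℝ) :
    exp (-(κ * |log ε|)) = ε ^ κ := by
  rw [abs_of_neg (log_neg hε₀ hε₁), rpow_def_of_pos hε₀]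
  ring_nf

theorem stmt_1_general
    (f : ℝ → ℝ)
    (p : ℝ) (hp : 0 < p)
    (am a0 ap : ℝ) (h1 : am < a0) (h2 : a0 < ap)
    (hzeros : ∀ u, f u = 0 ↔ u = am ∨ u = a0 ∨ u = ap)
    (hfap : deriv f ap = -p)
    (C₀ : ℝ) (hIcc : Set.Icc am ap ⊆ Set.Icc (-(2 * C₀)) (2 * C₀))
    (Y : ℝ → ℝ → ℝ)
    (hY0 : ∀ ξ ∈ Set.Icc (-(2 * C₀)) (2 * C₀), Y 0 ξ = ξ)
    (hYode : ∀ ξ ∈ Set.Icc (-(2 * C₀)) (2 * C₀), ∀ τ ≥ (0 : ℝ),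
      HasDerivAt (fun s => Y s ξ) (f (Y τ ξ)) τ) :
    ∃ η₀ ∈ Set.Ioo 0 (ap - a0), ∀ η ∈ Set.Ioo 0 η₀, ∀ κ > (0 : ℝ),
      ∃ C' > (0 : ℝ), ∃ ε₀ > (0 : ℝ), ∀ ε ∈ Set.Ioo (0 : ℝ) ε₀,
        ∀ ξ ∈ Set.Icc (ap - η) (ap - ε ^ κ), ap - ε ^ κ ≤ Y (C' * |Real.log ε|) ξ := by
  have hap : f ap = 0 := (hzeros ap).2 (Or.inr (Or.inr rfl))
  have hder : HasDerivAt f (-p) ap :=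
    hfap ▸ (differentiableAt_of_deriv_ne_zero (by linarith)).hasDerivAt
  obtain ⟨l, hl, hlin⟩ := mem_nhdsLT_iff_exists_Ioo_subset.1
    (eventually_mul_sub_lt_of_hasDerivAt hder hap (half_lt_self hp))
  obtain ⟨η₀, hη₀_pos, hη₀_l, hη₀_a0, hη₀_one⟩ :
      ∃ η₀ : ℝ, 0 < η₀ ∧ η₀ ≤ ap - l ∧ η₀ < ap - a0 ∧ η₀ ≤ 1 :=
    ⟨min (min (ap - l) ((ap - a0) / 2)) 1, lt_min (lt_min (sub_pos.2 hl) (by linarith)) one_pos,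
      (min_le_left _ _).trans (min_le_left _ _),
      ((min_le_left _ _).trans (min_le_right _ _)).trans_lt (by linarith), min_le_right _ _⟩
  refine ⟨η₀, ⟨hη₀_pos, hη₀_a0⟩, fun η hη κ hκ =>
    ⟨κ / (p / 2), by positivity, 1, one_pos, fun ε hε ξ hξ => ?_⟩⟩
  have hξbox : ξ ∈ Icc (-(2 * C₀)) (2 * C₀) :=
    hIcc ⟨by linarith [hξ.1, hη.2], by linarith [hξ.2, rpow_pos_of_pos hε.1 κ]⟩
  have hY_ge := sub_mul_exp_le_of_hasDerivAt hη.1 (by positivity)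
    (fun u hu => hlin ⟨by linarith [hu.1, hη.2], hu.2⟩) (hYode ξ hξbox)
    (by rw [hY0 ξ hξbox]; exact hξ.1) (by positivity : 0 ≤ κ / (p / 2) * |log ε|)
  rw [← mul_assoc, mul_div_cancel₀ _ (by positivity), exp_neg_mul_abs_log hε.1 hε.2] at hY_ge
  have hη_mul : η * ε ^ κ ≤ ε ^ κ :=
    mul_le_of_le_one_left (rpow_nonneg hε.1.le κ) (by linarith [hη.2])
  linarith

/-- Lemma 3.2: solutions of the ODE `dY/dτ = f(Y)` started in `[a₊ - η, a₊ - ε^κ]`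
reach `a₊ - ε^κ` within time `C |log ε|`. -/
theorem stmt_1
    (f : ℝ → ℝ) (hf : ContDiff ℝ 2 f)
    (p μ c C q : ℝ) (hp : 0 < p) (hμ : 0 < μ) (hc : 0 < c) (hCpos : 0 < C) (hq : 0 < q)
    (am a0 ap : ℝ) (h1 : am < a0) (h2 : a0 < ap)
    (hzeros : ∀ u, f u = 0 ↔ u = am ∨ u = a0 ∨ u = ap)
    (hfam : deriv f am = -p) (hfap : deriv f ap = -p) (hfa0 : deriv f a0 = μ)
    (hgrowth : ∀ u : ℝ, f u ≤ C * (1 + |u| ^ q))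
    (hfc : ∀ u, deriv f u ≤ c)
    (hsupp : ∀ u, ap ≤ u → f u ≤ -p * (u - ap))
    (hsubb : ∀ u, u ≤ am → -p * (u - am) ≤ f u)
    (C₀ : ℝ) (hC₀ : 1 < C₀) (hIcc : Set.Icc am ap ⊆ Set.Icc (-(2 * C₀)) (2 * C₀))
    (Y : ℝ → ℝ → ℝ)
    (hY0 : ∀ ξ ∈ Set.Icc (-(2 * C₀)) (2 * C₀), Y 0 ξ = ξ)
    (hYode : ∀ ξ ∈ Set.Icc (-(2 * C₀)) (2 * C₀), ∀ τ ≥ (0 : ℝ),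
      HasDerivAt (fun s => Y s ξ) (f (Y τ ξ)) τ) :
    ∃ η₀ ∈ Set.Ioo 0 (ap - a0), ∀ η ∈ Set.Ioo 0 η₀, ∀ κ > (0 : ℝ),
      ∃ C' > (0 : ℝ), ∃ ε₀ > (0 : ℝ), ∀ ε ∈ Set.Ioo (0 : ℝ) ε₀,
        ∀ ξ ∈ Set.Icc (ap - η) (ap - ε ^ κ), ap - ε ^ κ ≤ Y (C' * |Real.log ε|) ξ :=
  stmt_1_general f p hp am a0 ap h1 h2 hzeros hfap C₀ hIcc Y hY0 hYode
end

section
/- For every α > 0 and κ > 0 there exists a constant C₁ > 0 (depending only on α, κ and f) such that for all sufficiently small ε > 0 and every ξ ∈ [a₀ + ε^α, 2C₀], one has |Y(C₁·|log ε|, ξ) − a₊| ≤ ε^κ. -/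
/-!
For some `β > 0`, `f u ≥ β (u - a₀) (a₊ - u)` on `[a₀, a₊]`: the quotient
`f u / ((u - a₀) (u - a₊))` extends continuously (an iterated `dslope`) and has no zero on this
compact interval, as `a₀, a₊` are simple zeros and `f` has no zero in between. So `Y` stays above
the logistic sigmoid of rate `ν = β (a₊ - a₀) / 2` started at `a₀ + ε^α`, which gives
`a₊ - Y τ ≤ (a₊ - a₀)² ε^(-α) e^(-ν τ)`, while `f u ≤ -p (u - a₊)` above `a₊` gives
`Y τ - a₊ ≤ (2 C₀ - a₊ + 1) e^(-p τ / 2)`; halving the rates makes both comparisons strict. At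
`τ = C₁ |log ε|` both bounds are powers of `ε`, at most `ε^κ` once `C₁` is large.
-/

open Set Filter Topology Real

lemma le_of_hasDerivAt_of_lt_of_eq {u v u' v' : ℝ → ℝ}
    (hu : ∀ t ≥ 0, HasDerivAt u (u' t) t) (hv : ∀ t ≥ 0, HasDerivAt v (v' t) t)
    (h0 : u 0 ≤ v 0) (hlt : ∀ t ≥ 0, u t = v t → u' t < v' t) {t : ℝ} (ht : 0 ≤ t) :
    u t ≤ v t :=
  image_le_of_deriv_right_lt_deriv_boundary'
    (fun s hs => (hu s hs.1).continuousAt.continuousWithinAt)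
    (fun s hs => (hu s hs.1).hasDerivWithinAt) h0
    (fun s hs => (hv s hs.1).continuousAt.continuousWithinAt)
    (fun s hs => (hv s hs.1).hasDerivWithinAt) (fun s hs => hlt s hs.1) ⟨ht, le_rfl⟩

lemma Real.sigmoid_le_exp (x : ℝ) : sigmoid x ≤ exp x := by
  rw [sigmoid_def, exp_neg]
  have hx := exp_pos x
  rw [inv_le_comm₀ (by positivity) hx]
  linarith [inv_pos.2 hx]

lemma exists_continuous_eq_sub_mul_sub_mul {f : ℝ → ℝ} {a b : ℝ} (hf : Continuous f)
    (hab : a ≠ b) (hfa' : DifferentiableAt ℝ f a) (hfb' : DifferentiableAt ℝ f b)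
    (hfa : f a = 0) (hfb : f b = 0) :
    ∃ r : ℝ → ℝ, Continuous r ∧ (∀ u, f u = (u - a) * (u - b) * r u) ∧
      (a - b) * r a = deriv f a ∧ (b - a) * r b = deriv f b := by
  set q := dslope f a
  have hq (u : ℝ) : (u - a) * q u = f u := sub_smul_dslope_of_zero hfa u
  have hqb : q b = 0 := by
    have := hq b
    rw [hfb] at this
    exact (mul_eq_zero.1 this).resolve_left (sub_ne_zero.2 hab.symm)
  have hq_cont : Continuous q := continuous_iff_continuousAt.2 fun u => by
    rcases eq_or_ne u a with rfl | hu
    · exact continuousAt_dslope_same.2 hfa'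
    · exact (continuousAt_dslope_of_ne hu).2 hf.continuousAt
  have hq' : HasDerivAt q (deriv f b / (b - a)) b := by
    have h := hfb'.hasDerivAt.div ((hasDerivAt_id b).sub_const a) (sub_ne_zero.2 hab.symm)
    refine (h.congr_of_eventuallyEq ?_).congr_deriv ?_
    · filter_upwards [eventually_ne_nhds hab.symm] with u hu
      show dslope f a u = f u / (u - a)
      rw [dslope_of_ne _ hu, slope_def_field, hfa, sub_zero]
    · rw [hfb, id, zero_mul, sub_zero]
      field_simp
  refine ⟨dslope q b, continuous_iff_continuousAt.2 fun u => ?_, fun u => ?_, ?_, ?_⟩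
  · rcases eq_or_ne u b with rfl | hu
    · exact continuousAt_dslope_same.2 hq'.differentiableAt
    · exact (continuousAt_dslope_of_ne hu).2 hq_cont.continuousAt
  · rw [← hq u, mul_assoc, ← smul_eq_mul (u - b), sub_smul_dslope_of_zero hqb u]
  · rw [← smul_eq_mul, sub_smul_dslope_of_zero hqb a]
    exact dslope_same f a
  · rw [dslope_same, hq'.deriv]
    field_simp [sub_ne_zero.2 hab.symm]

lemma exists_pos_mul_le_of_zeros {f : ℝ → ℝ} {a b : ℝ} (hf : Continuous f) (hab : a < b)
    (hfa : f a = 0) (hfb : f b = 0) (ha : 0 < deriv f a) (hb : deriv f b < 0)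
    (hne : ∀ u ∈ Ioo a b, f u ≠ 0) :
    ∃ β > 0, ∀ u ∈ Icc a b, β * ((u - a) * (b - u)) ≤ f u := by
  obtain ⟨r, hr_cont, hfr, hra, hrb⟩ := exists_continuous_eq_sub_mul_sub_mul hf hab.ne
    (differentiableAt_of_deriv_ne_zero ha.ne') (differentiableAt_of_deriv_ne_zero hb.ne) hfa hfb
  replace hra : r a < 0 := by nlinarith
  replace hrb : r b < 0 := by nlinarith
  have hr_neg : ∀ u ∈ Icc a b, r u < 0 := by
    intro u hu
    by_contra! hru
    obtain ⟨z, hz, hrz⟩ := isPreconnected_Icc.intermediate_value (left_mem_Icc.2 hab.le) hu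
      hr_cont.continuousOn ⟨hra.le, hru⟩
    rcases eq_or_lt_of_le hz.1 with rfl | hza
    · exact hra.ne hrz
    rcases eq_or_lt_of_le hz.2 with rfl | hzb
    · exact hrb.ne hrz
    exact hne z ⟨hza, hzb⟩ (by rw [hfr, hrz, mul_zero])
  obtain ⟨z, hz, hmin⟩ := isCompact_Icc.exists_isMinOn (nonempty_Icc.2 hab.le)
    hr_cont.neg.continuousOn
  refine ⟨-r z, neg_pos.2 (hr_neg z hz), fun u hu => ?_⟩
  have hprod : 0 ≤ (u - a) * (b - u) := mul_nonneg (sub_nonneg.2 hu.1) (sub_nonneg.2 hu.2)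
  calc -r z * ((u - a) * (b - u)) ≤ -r u * ((u - a) * (b - u)) :=
        mul_le_mul_of_nonneg_right (hmin hu) hprod
    _ = f u := by rw [hfr]; ring

lemma sub_le_mul_exp_of_le_neg_mul {f g : ℝ → ℝ} (hg : ∀ t ≥ 0, HasDerivAt g (f (g t)) t)
    {b p K : ℝ} (hp : 0 < p) (hK : 0 < K)
    (hf : ∀ u, b ≤ u → f u ≤ -p * (u - b)) (h0 : g 0 ≤ b + K) {t : ℝ} (ht : 0 ≤ t) :
    g t - b ≤ K * exp (-(p / 2 * t)) := by
  have hB (s : ℝ) : HasDerivAt (fun s => b + K * exp (-(p / 2 * s)))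
      (K * (exp (-(p / 2 * s)) * -(p / 2))) s := by
    have := ((hasDerivAt_id s).const_mul (p / 2)).neg.exp.const_mul K |>.const_add b
    simpa using this
  have hcomp := le_of_hasDerivAt_of_lt_of_eq hg (fun s _ => hB s) (by simpa using h0) ?_ ht
  · linarith
  intro s _ hs
  have hKE := mul_pos hK (exp_pos (-(p / 2 * s)))
  rw [hs]
  have hfs := hf _ (le_add_of_nonneg_right hKE.le)
  nlinarith

lemma sub_le_mul_exp_of_mul_mul_le {f g : ℝ → ℝ} (hg : ∀ t ≥ 0, HasDerivAt g (f (g t)) t)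
    {a b β δ : ℝ} (hab : a < b) (hβ : 0 < β)
    (hf : ∀ u ∈ Icc a b, β * ((u - a) * (b - u)) ≤ f u) (hδ : 0 < δ) (h0 : a + δ ≤ g 0)
    {t : ℝ} (ht : 0 ≤ t) :
    b - g t ≤ (b - a) ^ 2 / δ * exp (-(β * (b - a) / 2 * t)) := by
  set ν := β * (b - a) / 2
  set s := log ((b - a) / δ)
  have hba : 0 < b - a := sub_pos.2 hab
  have hB (x : ℝ) : HasDerivAt (fun x => a + (b - a) * sigmoid (ν * x - s))
      ((b - a) * (sigmoid (ν * x - s) * (1 - sigmoid (ν * x - s)) * ν)) x := by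
    have := (hasDerivAt_sigmoid _).comp x (((hasDerivAt_id x).const_mul ν).sub_const s)
    simpa using (this.const_mul (b - a)).const_add a
  have hexp_s : exp s = (b - a) / δ := exp_log (div_pos hba hδ)
  have hB0 : a + (b - a) * sigmoid (ν * 0 - s) ≤ g 0 := by
    calc a + (b - a) * sigmoid (ν * 0 - s) ≤ a + (b - a) * exp (-s) := by
          rw [mul_zero, zero_sub]
          gcongr
          exact sigmoid_le_exp _
      _ = a + δ := by rw [exp_neg, hexp_s]; field_simp
      _ ≤ g 0 := h0
  have hcomp := le_of_hasDerivAt_of_lt_of_eq (fun x _ => hB x) hg hB0 ?_ ht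
  · calc b - g t ≤ (b - a) * (1 - sigmoid (ν * t - s)) := by linarith
      _ = (b - a) * sigmoid (s - ν * t) := by rw [← sigmoid_neg, neg_sub]
      _ ≤ (b - a) * exp (s - ν * t) := by gcongr; exact sigmoid_le_exp _
      _ = (b - a) ^ 2 / δ * exp (-(ν * t)) := by
        rw [exp_sub, exp_neg, hexp_s]; field_simp
  intro x _ hx
  set σ := sigmoid (ν * x - s)
  have hσ0 := sigmoid_pos (ν * x - s)
  have hσ1 := sigmoid_lt_one (ν * x - s)
  have hmem : g x ∈ Icc a b := by
    rw [← hx]; constructor <;> nlinarith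
  have hfx := hf _ hmem
  rw [← hx] at hfx ⊢
  have hσ1' : 0 < 1 - σ := sub_pos.2 hσ1
  have hlogistic : β * ((a + (b - a) * σ - a) * (b - (a + (b - a) * σ))) =
      2 * ((b - a) * (σ * (1 - σ) * ν)) := by ring
  have : 0 < (b - a) * (σ * (1 - σ) * ν) := by positivity
  linarith

lemma div_rpow_mul_exp_neg_le_rpow {A r α κ C ε : ℝ} (hA : 0 ≤ A) (hC : κ + α + 1 ≤ r * C)
    (hε : ε ∈ Ioo 0 1) (hAε : A * ε ≤ 1) :
    A / ε ^ α * exp (-(r * (C * |log ε|))) ≤ ε ^ κ := by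
  have hε0 := hε.1
  have hlog : |log ε| = -log ε := abs_of_neg (log_neg hε0 hε.2)
  calc A / ε ^ α * exp (-(r * (C * |log ε|))) = A / ε ^ α * ε ^ (r * C) := by
        rw [hlog, rpow_def_of_pos hε0 (r * C)]; ring_nf
    _ ≤ A / ε ^ α * ε ^ (κ + α + 1) := by
        gcongr ?_ * ?_
        exact rpow_le_rpow_of_exponent_ge hε0 hε.2.le hC
    _ = A * ε * ε ^ κ := by
        rw [rpow_add hε0, rpow_add hε0, rpow_one]; field_simp
    _ ≤ ε ^ κ := mul_le_of_le_one_left (rpow_nonneg hε0.le κ) hAε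

lemma exists_pos_eventually_mul_exp_le_rpow {A K r₁ r₂ α κ : ℝ} (hA : 0 ≤ A) (hK : 0 ≤ K)
    (hr₁ : 0 < r₁) (hr₂ : 0 < r₂) (hα : 0 ≤ α) (hκ : 0 ≤ κ) :
    ∃ C₁ > 0, ∀ᶠ ε in 𝓝[>] 0,
      A / ε ^ α * exp (-(r₁ * (C₁ * |log ε|))) ≤ ε ^ κ ∧
      K * exp (-(r₂ * (C₁ * |log ε|))) ≤ ε ^ κ := by
  set C₁ := (κ + α + 1) / r₁ + (κ + 1) / r₂
  have hC₁ : κ + α + 1 ≤ r₁ * C₁ := by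
    rw [mul_add, mul_div_cancel₀ _ hr₁.ne']
    have : 0 < r₁ * ((κ + 1) / r₂) := by positivity
    linarith
  have hC₂ : κ + 0 + 1 ≤ r₂ * C₁ := by
    rw [mul_add, mul_div_cancel₀ _ hr₂.ne']
    have : 0 < r₂ * ((κ + α + 1) / r₁) := by positivity
    linarith
  have hsmall (M : ℝ) : ∀ᶠ ε in 𝓝[>] (0 : ℝ), M * ε < 1 := by
    have : Tendsto (fun ε : ℝ => M * ε) (𝓝 0) (𝓝 0) := by
      simpa using (continuous_const_mul M).tendsto 0
    exact nhdsWithin_le_nhds (this.eventually (eventually_lt_nhds one_pos))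
  refine ⟨C₁, by positivity, ?_⟩
  filter_upwards [self_mem_nhdsWithin, hsmall 1, hsmall A, hsmall K]
    with ε (hε0 : 0 < ε) hε1 hAε hKε
  have hε : ε ∈ Ioo 0 1 := ⟨hε0, by linarith⟩
  exact ⟨div_rpow_mul_exp_neg_le_rpow hA hC₁ hε hAε.le,
    by simpa using div_rpow_mul_exp_neg_le_rpow hK hC₂ hε hKε.le⟩

theorem stmt_2_general
    (f : ℝ → ℝ) (hf : ContDiff ℝ 2 f)
    (p μ : ℝ) (hp : 0 < p) (hμ : 0 < μ)
    (am a0 ap : ℝ) (h1 : am < a0) (h2 : a0 < ap)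
    (hzeros : ∀ u, f u = 0 ↔ u = am ∨ u = a0 ∨ u = ap)
    (hfap : deriv f ap = -p) (hfa0 : deriv f a0 = μ)
    (hsupp : ∀ u, ap ≤ u → f u ≤ -p * (u - ap))
    (C₀ : ℝ) (hIcc : Set.Icc am ap ⊆ Set.Icc (-(2 * C₀)) (2 * C₀))
    (Y : ℝ → ℝ → ℝ)
    (hY0 : ∀ ξ ∈ Set.Icc (-(2 * C₀)) (2 * C₀), Y 0 ξ = ξ)
    (hYode : ∀ ξ ∈ Set.Icc (-(2 * C₀)) (2 * C₀), ∀ τ ≥ (0 : ℝ),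
      HasDerivAt (fun s => Y s ξ) (f (Y τ ξ)) τ) :
    ∀ α > (0 : ℝ), ∀ κ > (0 : ℝ), ∃ C₁ > (0 : ℝ), ∃ ε₀ > (0 : ℝ),
      ∀ ε ∈ Set.Ioo (0 : ℝ) ε₀, ∀ ξ ∈ Set.Icc (a0 + ε ^ α) (2 * C₀),
        |Y (C₁ * |Real.log ε|) ξ - ap| ≤ ε ^ κ := by
  intro α hα κ hκ
  obtain ⟨β, hβ, hfβ⟩ := exists_pos_mul_le_of_zeros hf.continuous h2
    ((hzeros a0).2 (by simp)) ((hzeros ap).2 (by simp)) (hfa0 ▸ hμ) (by linarith)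
    fun u hu hfu => by rcases (hzeros u).1 hfu with rfl | rfl | rfl <;> linarith [hu.1, hu.2]
  have ham := hIcc ⟨le_rfl, (h1.trans h2).le⟩
  have hap := hIcc ⟨(h1.trans h2).le, le_rfl⟩
  have hK : 0 < 2 * C₀ - ap + 1 := by linarith [hap.2]
  obtain ⟨C₁, hC₁, hdecay⟩ := exists_pos_eventually_mul_exp_le_rpow (sq_nonneg (ap - a0)) hK.le
    (by have := sub_pos.2 h2; positivity : 0 < β * (ap - a0) / 2) (half_pos hp) hα.le hκ.le
  refine ⟨C₁, hC₁, (nhdsGT_basis 0).eventually_iff.1 ?_⟩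
  filter_upwards [self_mem_nhdsWithin, hdecay] with ε (hε0 : 0 < ε) ⟨hbelow, habove⟩ ξ hξ
  have hεα := rpow_pos_of_pos hε0 α
  have hξ' : ξ ∈ Icc (-(2 * C₀)) (2 * C₀) := ⟨by linarith [ham.1, hξ.1], hξ.2⟩
  have hτ : 0 ≤ C₁ * |log ε| := by positivity
  rw [abs_sub_le_iff]
  constructor
  · refine (sub_le_mul_exp_of_le_neg_mul (hYode ξ hξ') hp hK hsupp ?_ hτ).trans habove
    rw [hY0 ξ hξ']
    linarith [hξ.2]
  · refine (sub_le_mul_exp_of_mul_mul_le (hYode ξ hξ') h2 hβ hfβ hεα ?_ hτ).trans hbelow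
    rw [hY0 ξ hξ']
    exact hξ.1

/-- Proposition 3.3: solutions of the ODE `dY/dτ = f(Y)` started in `[a₀ + ε^α, 2C₀]`
are `ε^κ`-close to `a₊` at time `C₁ |log ε|`. -/
theorem stmt_2
    (f : ℝ → ℝ) (hf : ContDiff ℝ 2 f)
    (p μ c C q : ℝ) (hp : 0 < p) (hμ : 0 < μ) (hc : 0 < c) (hCpos : 0 < C) (hq : 0 < q)
    (am a0 ap : ℝ) (h1 : am < a0) (h2 : a0 < ap)
    (hzeros : ∀ u, f u = 0 ↔ u = am ∨ u = a0 ∨ u = ap)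
    (hfam : deriv f am = -p) (hfap : deriv f ap = -p) (hfa0 : deriv f a0 = μ)
    (hgrowth : ∀ u : ℝ, f u ≤ C * (1 + |u| ^ q))
    (hfc : ∀ u, deriv f u ≤ c)
    (hsupp : ∀ u, ap ≤ u → f u ≤ -p * (u - ap))
    (hsubb : ∀ u, u ≤ am → -p * (u - am) ≤ f u)
    (C₀ : ℝ) (hC₀ : 1 < C₀) (hIcc : Set.Icc am ap ⊆ Set.Icc (-(2 * C₀)) (2 * C₀))
    (Y : ℝ → ℝ → ℝ)
    (hY0 : ∀ ξ ∈ Set.Icc (-(2 * C₀)) (2 * C₀), Y 0 ξ = ξ)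
    (hYode : ∀ ξ ∈ Set.Icc (-(2 * C₀)) (2 * C₀), ∀ τ ≥ (0 : ℝ),
      HasDerivAt (fun s => Y s ξ) (f (Y τ ξ)) τ) :
    ∀ α > (0 : ℝ), ∀ κ > (0 : ℝ), ∃ C₁ > (0 : ℝ), ∃ ε₀ > (0 : ℝ),
      ∀ ε ∈ Set.Ioo (0 : ℝ) ε₀, ∀ ξ ∈ Set.Icc (a0 + ε ^ α) (2 * C₀),
        |Y (C₁ * |Real.log ε|) ξ - ap| ≤ ε ^ κ :=
  stmt_2_general f hf p μ hp hμ am a0 ap h1 h2 hzeros hfap hfa0 hsupp C₀ hIcc Y hY0 hYode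
end

section
/- For every α > 0 and κ > 0 there exists a constant C₁ > 0 (depending only on α, κ and f) such that for all sufficiently small ε > 0 and every ξ ∈ [−2C₀, a₀ − ε^α], one has |Y(C₁·|log ε|, ξ) − a₋| ≤ ε^κ. -/
/-!
Comparison with explicit barriers, writing `g τ = Y τ ξ` and `δ = ε ^ α`. Near the repelling
zero `a₀` one has `f u ≤ -(μ/2) (a₀ - u)`, so `a₀ - δ e^{μτ/4}` is a strict supersolution and
pushes `g` a fixed distance `ρ₀` below `a₀` within time `O(α |log ε|)`. On the compact middle
region `f ≤ -m < 0`, so `g` crosses it in bounded time. Near the attracting zero `a₋` the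
supersolution `a₋ + ρ₁ e^{-pτ/4}` then brings `g` within `ε ^ κ` of `a₋` after a further
`O(κ |log ε|)`. From below, the bound `f u ≥ -p (u - a₋)` for `u ≤ a₋` makes `a₋ - K e^{-pτ/2}`
a strict subsolution for all time. Every barrier moves at half the linearised rate, which makes
the comparison strict.
-/

open Set Topology Real

theorem image_le_of_strict_supersolution {f g B B' : ℝ → ℝ} {a b : ℝ}
    (hg : ∀ τ ∈ Icc a b, HasDerivAt g (f (g τ)) τ)
    (hB : ∀ τ ∈ Icc a b, HasDerivAt B (B' τ) τ)
    (ha : g a ≤ B a) (hsuper : ∀ τ ∈ Ico a b, f (B τ) < B' τ) :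
    ∀ τ ∈ Icc a b, g τ ≤ B τ := fun _ hτ =>
  image_le_of_deriv_right_lt_deriv_boundary'
    (fun s hs => (hg s hs).continuousAt.continuousWithinAt)
    (fun s hs => (hg s (Ico_subset_Icc_self hs)).hasDerivWithinAt) ha
    (fun s hs => (hB s hs).continuousAt.continuousWithinAt)
    (fun s hs => (hB s (Ico_subset_Icc_self hs)).hasDerivWithinAt)
    (fun s hs hgB => hgB ▸ hsuper s hs) hτ

theorem hasDerivAt_add_mul_exp (z c k t₀ τ : ℝ) :
    HasDerivAt (fun t => z + c * exp (k * (t - t₀))) (k * (c * exp (k * (τ - t₀)))) τ := by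
  have h := ((((hasDerivAt_id τ).sub_const t₀).const_mul k).exp.const_mul c).const_add z
  exact h.congr_deriv (by simp only [id]; ring)

theorem exists_forall_Icc_le_neg_mul_of_lt_deriv {f : ℝ → ℝ} (hf : ContDiff ℝ 1 f)
    {z l R : ℝ} (hz : f z = 0) (hl : l < deriv f z) (hR : 0 < R) :
    ∃ ρ ∈ Ioc 0 R, ∀ u ∈ Icc (z - ρ) z, f u ≤ -l * (z - u) := by
  have hev : ∀ᶠ u in 𝓝[≤] z, l < deriv f u := nhdsWithin_le_nhds
    ((hf.continuous_deriv le_rfl).continuousAt.eventually (lt_mem_nhds hl))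
  obtain ⟨a, haz, hsub⟩ := mem_nhdsLE_iff_exists_Icc_subset.mp hev
  refine ⟨min R (z - a), ⟨lt_min hR (sub_pos.2 haz), min_le_left _ _⟩, fun u hu => ?_⟩
  have hua : a ≤ u := by linarith [hu.1, min_le_right R (z - a)]
  have := (convex_Icc u z).mul_sub_le_image_sub_of_le_deriv hf.continuous.continuousOn
    (hf.differentiable one_ne_zero).differentiableOn
    (fun x hx => (hsub (Icc_subset_Icc_left hua (interior_subset hx))).le)
    u (left_mem_Icc.2 hu.2) z (right_mem_Icc.2 hu.2) hu.2
  linarith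

theorem exists_forall_Icc_le_neg_mul_of_deriv_lt {f : ℝ → ℝ} (hf : ContDiff ℝ 1 f)
    {z l R : ℝ} (hz : f z = 0) (hl : deriv f z < -l) (hR : 0 < R) :
    ∃ ρ ∈ Ioc 0 R, ∀ u ∈ Icc z (z + ρ), f u ≤ -l * (u - z) := by
  have hev : ∀ᶠ u in 𝓝[≥] z, deriv f u < -l := nhdsWithin_le_nhds
    ((hf.continuous_deriv le_rfl).continuousAt.eventually (gt_mem_nhds hl))
  obtain ⟨b, hzb, hsub⟩ := mem_nhdsGE_iff_exists_Icc_subset.mp hev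
  refine ⟨min R (b - z), ⟨lt_min hR (sub_pos.2 hzb), min_le_left _ _⟩, fun u hu => ?_⟩
  have hub : u ≤ b := by linarith [hu.2, min_le_right R (b - z)]
  have := (convex_Icc z u).image_sub_le_mul_sub_of_deriv_le hf.continuous.continuousOn
    (hf.differentiable one_ne_zero).differentiableOn
    (fun x hx => (hsub (Icc_subset_Icc_right hub (interior_subset hx))).le)
    z (left_mem_Icc.2 hu.1) u (right_mem_Icc.2 hu.1) hu.1
  linarith

theorem forall_mem_Ioo_neg_of_ne_zero {f : ℝ → ℝ} (hf : Continuous f) {a b w : ℝ}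
    (hne : ∀ u ∈ Ioo a b, f u ≠ 0) (hw : w ∈ Ioo a b) (hfw : f w < 0) :
    ∀ u ∈ Ioo a b, f u < 0 := by
  intro u hu
  by_contra! hfu
  obtain ⟨v, hv, hfv⟩ :=
    isPreconnected_Ioo.intermediate_value hw hu hf.continuousOn ⟨hfw.le, hfu⟩
  exact hne v hv hfv

theorem exists_rates_of_bistable {f : ℝ → ℝ} (hf : ContDiff ℝ 1 f) {am a0 l₀ l₁ : ℝ}
    (h : am < a0) (ham : f am = 0) (ha0 : f a0 = 0) (hne : ∀ u ∈ Ioo am a0, f u ≠ 0)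
    (hl₀ : 0 < l₀) (hl₀a0 : l₀ < deriv f a0) (hl₁am : deriv f am < -l₁) :
    ∃ ρ₀ ρ₁ m : ℝ, 0 < ρ₀ ∧ 0 < ρ₁ ∧ 0 < m ∧ ρ₀ ≤ 1 ∧ ρ₁ ≤ 1 ∧ am + ρ₁ ≤ a0 - ρ₀ ∧
      (∀ u ∈ Icc (a0 - ρ₀) a0, f u ≤ -l₀ * (a0 - u)) ∧
      (∀ u ∈ Icc (am + ρ₁) (a0 - ρ₀), f u ≤ -m) ∧
      (∀ u ∈ Icc am (am + ρ₁), f u ≤ -l₁ * (u - am)) := by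
  have hR : 0 < min 1 ((a0 - am) / 2) := lt_min one_pos (by linarith)
  have hR₁ := min_le_left 1 ((a0 - am) / 2)
  have hR₂ := min_le_right 1 ((a0 - am) / 2)
  obtain ⟨ρ₀, ⟨hρ₀, hρ₀R⟩, hf₀⟩ := exists_forall_Icc_le_neg_mul_of_lt_deriv hf ha0 hl₀a0 hR
  obtain ⟨ρ₁, ⟨hρ₁, hρ₁R⟩, hf₁⟩ := exists_forall_Icc_le_neg_mul_of_deriv_lt hf ham hl₁am hR
  have hneg : ∀ u ∈ Ioo am a0, f u < 0 :=
    forall_mem_Ioo_neg_of_ne_zero hf.continuous hne (w := a0 - ρ₀) ⟨by linarith, by linarith⟩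
      (by nlinarith [hf₀ (a0 - ρ₀) ⟨le_rfl, by linarith⟩])
  obtain ⟨m, hm, hfm⟩ := isCompact_Icc.exists_forall_le' (a := 0) hf.continuous.neg.continuousOn
    fun u (hu : u ∈ Icc (am + ρ₁) (a0 - ρ₀)) =>
      neg_pos.2 (hneg u ⟨by linarith [hu.1], by linarith [hu.2]⟩)
  exact ⟨ρ₀, ρ₁, m, hρ₀, hρ₁, hm, by linarith, by linarith, by linarith, hf₀,
    fun u hu => le_neg_of_le_neg (hfm u hu), hf₁⟩

section Trajectory

variable {f g : ℝ → ℝ} {t₀ : ℝ}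

theorem le_sub_of_repelling {z l ρ δ : ℝ} (hl : 0 < l) (hδ : 0 < δ) (hδρ : δ ≤ ρ)
    (hf : ∀ u ∈ Icc (z - ρ) z, f u ≤ -l * (z - u))
    (hg : ∀ τ ≥ t₀, HasDerivAt g (f (g τ)) τ) (h₀ : g t₀ ≤ z - δ) :
    g (t₀ + 2 / l * log (ρ / δ)) ≤ z - ρ := by
  set t₁ := t₀ + 2 / l * log (ρ / δ)
  have hexp : exp (l / 2 * (t₁ - t₀)) = ρ / δ := by
    rw [show l / 2 * (t₁ - t₀) = log (ρ / δ) by simp only [t₁]; field_simp; ring]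
    exact exp_log (div_pos (hδ.trans_le hδρ) hδ)
  have ht₀₁ : t₀ ≤ t₁ := by
    have : 0 ≤ log (ρ / δ) := log_nonneg ((one_le_div hδ).2 hδρ)
    exact le_add_of_nonneg_right (mul_nonneg (by positivity) this)
  have key := image_le_of_strict_supersolution (hg := fun τ hτ => hg τ hτ.1)
    (fun τ _ => hasDerivAt_add_mul_exp z (-δ) (l / 2) t₀ τ) (by simpa [← sub_eq_add_neg] using h₀)
    ?_ t₁ ⟨ht₀₁, le_rfl⟩
  · rw [hexp] at key
    field_simp at key
    linarith
  · intro τ hτ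
    have hE : δ * exp (l / 2 * (τ - t₀)) < ρ := by
      have : exp (l / 2 * (τ - t₀)) < ρ / δ := by
        rw [← hexp]; gcongr; exact hτ.2
      rwa [lt_div_iff₀' hδ] at this
    have hpos : 0 < δ * exp (l / 2 * (τ - t₀)) := by positivity
    have := hf (z + -δ * exp (l / 2 * (τ - t₀))) ⟨by linarith, by linarith⟩
    nlinarith

theorem le_of_transit {a b m : ℝ} (hm : 0 < m) (hba : b ≤ a)
    (hf : ∀ u ∈ Icc b a, f u ≤ -m)
    (hg : ∀ τ ≥ t₀, HasDerivAt g (f (g τ)) τ) (h₀ : g t₀ ≤ a) :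
    g (t₀ + 2 * (a - b) / m) ≤ b := by
  set t₁ := t₀ + 2 * (a - b) / m
  have ht₀₁ : t₀ ≤ t₁ := le_add_of_nonneg_right (div_nonneg (by linarith) hm.le)
  have ht₁ : m / 2 * (t₁ - t₀) = a - b := by simp only [t₁]; field_simp; ring
  have hB (τ : ℝ) : HasDerivAt (fun t => a - m / 2 * (t - t₀)) (-(m / 2)) τ := by
    simpa using (((hasDerivAt_id τ).sub_const t₀).const_mul (m / 2)).const_sub a
  have key := image_le_of_strict_supersolution (hg := fun τ hτ => hg τ hτ.1)
    (fun τ _ => hB τ) (by simpa using h₀) ?_ t₁ ⟨ht₀₁, le_rfl⟩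
  · linarith
  · intro τ hτ
    have hτ₁ : m / 2 * (τ - t₀) < m / 2 * (t₁ - t₀) := by gcongr; exact hτ.2
    have := hf (a - m / 2 * (τ - t₀)) ⟨by linarith, by nlinarith [hτ.1]⟩
    linarith

theorem le_add_mul_exp_of_attracting {z l ρ : ℝ} (hl : 0 < l) (hρ : 0 < ρ)
    (hf : ∀ u ∈ Icc z (z + ρ), f u ≤ -l * (u - z))
    (hg : ∀ τ ≥ t₀, HasDerivAt g (f (g τ)) τ) (h₀ : g t₀ ≤ z + ρ) :
    ∀ τ ≥ t₀, g τ ≤ z + ρ * exp (-(l / 2) * (τ - t₀)) := by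
  intro τ hτ
  refine image_le_of_strict_supersolution (hg := fun s hs => hg s hs.1)
    (fun s _ => hasDerivAt_add_mul_exp z ρ (-(l / 2)) t₀ s) (by simpa using h₀) ?_ τ ⟨hτ, le_rfl⟩
  intro s hs
  have hE : exp (-(l / 2) * (s - t₀)) ≤ 1 := exp_le_one_iff.2 (by nlinarith [hs.1])
  have hpos : 0 < ρ * exp (-(l / 2) * (s - t₀)) := by positivity
  have := hf (z + ρ * exp (-(l / 2) * (s - t₀))) ⟨by linarith, by nlinarith⟩
  nlinarith

theorem sub_mul_exp_le_of_attracting {z l ρ : ℝ} (hl : 0 < l) (hρ : 0 < ρ)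
    (hf : ∀ u ∈ Icc (z - ρ) z, -l * (u - z) ≤ f u)
    (hg : ∀ τ ≥ t₀, HasDerivAt g (f (g τ)) τ) (h₀ : z - ρ ≤ g t₀) :
    ∀ τ ≥ t₀, z - ρ * exp (-(l / 2) * (τ - t₀)) ≤ g τ := by
  have hreflect := le_add_mul_exp_of_attracting (f := fun u => -f (-u)) (g := -g) (z := -z) hl hρ
    (fun u hu => by have := hf (-u) ⟨by linarith [hu.2], by linarith [hu.1]⟩; linarith)
    (fun τ hτ => by simpa using (hg τ hτ).neg) (by simp only [Pi.neg_apply]; linarith)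
  intro τ hτ
  have := hreflect τ hτ
  simp only [Pi.neg_apply] at this
  linarith

theorem le_add_exp_of_escape_transit_attract {am a0 ρ₀ ρ₁ l₀ l₁ m α κ L T : ℝ}
    (hl₀ : 0 < l₀) (hl₁ : 0 < l₁) (hm : 0 < m) (hρ₀ : 0 < ρ₀) (hρ₁ : 0 < ρ₁) (hκ : 0 ≤ κ)
    (hρ₀1 : ρ₀ ≤ 1) (hρ₁1 : ρ₁ ≤ 1) (hgap : am + ρ₁ ≤ a0 - ρ₀) (hL : 1 ≤ L) (hαL : -log ρ₀ ≤ α * L)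
    (hf₀ : ∀ u ∈ Icc (a0 - ρ₀) a0, f u ≤ -l₀ * (a0 - u))
    (hmid : ∀ u ∈ Icc (am + ρ₁) (a0 - ρ₀), f u ≤ -m)
    (hf₁ : ∀ u ∈ Icc am (am + ρ₁), f u ≤ -l₁ * (u - am))
    (hg : ∀ τ ≥ 0, HasDerivAt g (f (g τ)) τ) (h₀ : g 0 ≤ a0 - exp (-(α * L)))
    (hT : (2 * α / l₀ + 2 * (a0 - am) / m + 2 * κ / l₁) * L ≤ T) :
    g T ≤ am + exp (-(κ * L)) := by
  have hδ₀ : 0 < exp (-(α * L)) := exp_pos _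
  have hδ : exp (-(α * L)) ≤ ρ₀ := by
    calc exp (-(α * L)) ≤ exp (log ρ₀) := exp_le_exp.2 (by linarith)
      _ = ρ₀ := exp_log hρ₀
  have h₁ := le_sub_of_repelling hl₀ hδ₀ hδ hf₀ hg h₀
  set t₁ := 0 + 2 / l₀ * log (ρ₀ / exp (-(α * L)))
  have ht₁ : 0 ≤ t₁ ∧ t₁ ≤ 2 * α / l₀ * L := by
    have hlog : log (ρ₀ / exp (-(α * L))) = log ρ₀ + α * L := by
      rw [log_div hρ₀.ne' hδ₀.ne', log_exp]; ring
    have : 0 ≤ log (ρ₀ / exp (-(α * L))) := log_nonneg ((one_le_div hδ₀).2 hδ)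
    have : log ρ₀ ≤ 0 := log_nonpos hρ₀.le hρ₀1
    have : 2 / l₀ * (log ρ₀ + α * L) ≤ 2 / l₀ * (α * L) := by gcongr; linarith
    refine ⟨by simp only [t₁]; positivity, ?_⟩
    simp only [t₁, hlog]
    linarith [show 2 * α / l₀ * L = 2 / l₀ * (α * L) by ring]
  have h₂ := le_of_transit hm hgap hmid (fun τ hτ => hg τ (ht₁.1.trans hτ)) h₁
  set t₂ := t₁ + 2 * (a0 - ρ₀ - (am + ρ₁)) / m
  have ht₂ : 0 ≤ t₂ ∧ t₂ ≤ (2 * α / l₀ + 2 * (a0 - am) / m) * L := by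
    have : 2 * (a0 - ρ₀ - (am + ρ₁)) / m ≤ 2 * (a0 - am) / m :=
      div_le_div_of_nonneg_right (by linarith) hm.le
    have : 0 ≤ 2 * (a0 - ρ₀ - (am + ρ₁)) / m := div_nonneg (by linarith) hm.le
    have : 2 * (a0 - am) / m ≤ 2 * (a0 - am) / m * L := le_mul_of_one_le_right (by linarith) hL
    constructor <;> linarith
  have hT₂ : 2 * κ / l₁ * L ≤ T - t₂ := by nlinarith
  have h₃ := le_add_mul_exp_of_attracting hl₁ hρ₁ hf₁ (fun τ hτ => hg τ (ht₂.1.trans hτ)) h₂ T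
    (by nlinarith [mul_nonneg (div_nonneg (mul_nonneg zero_le_two hκ) hl₁.le) (zero_le_one.trans hL)])
  calc g T ≤ am + ρ₁ * exp (-(l₁ / 2) * (T - t₂)) := h₃
    _ ≤ am + 1 * exp (-(κ * L)) := by
      gcongr
      have : κ * L = l₁ / 2 * (2 * κ / l₁ * L) := by field_simp
      nlinarith
    _ = am + exp (-(κ * L)) := by rw [one_mul]

theorem sub_exp_le_of_attracting {am p K κ L T : ℝ} (hp : 0 < p) (hK : 1 ≤ K) (hκ : 0 ≤ κ)
    (hL : 1 ≤ L) (hf : ∀ u ≤ am, -p * (u - am) ≤ f u)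
    (hg : ∀ τ ≥ 0, HasDerivAt g (f (g τ)) τ) (h₀ : am - K ≤ g 0)
    (hT : 2 * (κ + log K) / p * L ≤ T) :
    am - exp (-(κ * L)) ≤ g T := by
  have hlogK : 0 ≤ log K := log_nonneg hK
  have hpT : κ * L + log K ≤ p / 2 * T := by
    have : (κ + log K) * L = p / 2 * (2 * (κ + log K) / p * L) := by field_simp
    nlinarith
  have := sub_mul_exp_le_of_attracting hp (by linarith) (fun u hu => hf u hu.2) hg h₀ T
    (by nlinarith)
  calc am - exp (-(κ * L)) ≤ am - exp (log K + -(p / 2) * (T - 0)) := by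
        gcongr; linarith
    _ = am - K * exp (-(p / 2) * (T - 0)) := by rw [exp_add, exp_log (by linarith)]
    _ ≤ g T := this

theorem abs_sub_le_exp_of_bistable {am a0 ρ₀ ρ₁ l₀ l₁ m p K α κ L T : ℝ}
    (hl₀ : 0 < l₀) (hl₁ : 0 < l₁) (hm : 0 < m) (hp : 0 < p) (hρ₀ : 0 < ρ₀) (hρ₁ : 0 < ρ₁)
    (hK : 1 ≤ K) (hα : 0 ≤ α) (hκ : 0 ≤ κ) (hρ₀1 : ρ₀ ≤ 1) (hρ₁1 : ρ₁ ≤ 1)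
    (hgap : am + ρ₁ ≤ a0 - ρ₀) (hL : 1 ≤ L) (hαL : -log ρ₀ ≤ α * L)
    (hf₀ : ∀ u ∈ Icc (a0 - ρ₀) a0, f u ≤ -l₀ * (a0 - u))
    (hmid : ∀ u ∈ Icc (am + ρ₁) (a0 - ρ₀), f u ≤ -m)
    (hf₁ : ∀ u ∈ Icc am (am + ρ₁), f u ≤ -l₁ * (u - am))
    (hsub : ∀ u ≤ am, -p * (u - am) ≤ f u)
    (hg : ∀ τ ≥ 0, HasDerivAt g (f (g τ)) τ) (h₀ : g 0 ∈ Icc (am - K) (a0 - exp (-(α * L))))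
    (hT : (2 * α / l₀ + 2 * (a0 - am) / m + 2 * κ / l₁ + 2 * (κ + log K) / p) * L ≤ T) :
    |g T - am| ≤ exp (-(κ * L)) := by
  have : 0 ≤ log K := log_nonneg hK
  have : 0 < a0 - am := by linarith
  have hlower := sub_exp_le_of_attracting hp hK hκ hL hsub hg h₀.1
    (hT.trans' (mul_le_mul_of_nonneg_right (le_add_of_nonneg_left (by positivity)) (by linarith)))
  have hupper := le_add_exp_of_escape_transit_attract hl₀ hl₁ hm hρ₀ hρ₁ hκ hρ₀1 hρ₁1 hgap hL hαL
    hf₀ hmid hf₁ hg h₀.2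
    (hT.trans' (mul_le_mul_of_nonneg_right (le_add_of_nonneg_right (by positivity)) (by linarith)))
  rw [abs_le]
  constructor <;> linarith

end Trajectory

theorem exists_pos_forall_Ioo_eq_exp_neg (L₀ : ℝ) :
    ∃ ε₀ > 0, ∀ ε ∈ Ioo 0 ε₀, ∃ L > L₀, ε = exp (-L) := by
  refine ⟨exp (-L₀), exp_pos _, fun ε hε => ⟨-log ε, ?_, by rw [neg_neg, exp_log hε.1]⟩⟩
  have := log_lt_log hε.1 hε.2
  rw [log_exp] at this
  linarith

theorem stmt_3_general
    (f : ℝ → ℝ) (hf : ContDiff ℝ 2 f)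
    (p μ : ℝ) (hp : 0 < p) (hμ : 0 < μ)
    (am a0 ap : ℝ) (h1 : am < a0) (h2 : a0 < ap)
    (hzeros : ∀ u, f u = 0 ↔ u = am ∨ u = a0 ∨ u = ap)
    (hfam : deriv f am = -p) (hfa0 : deriv f a0 = μ)
    (hsubb : ∀ u, u ≤ am → -p * (u - am) ≤ f u)
    (C₀ : ℝ) (hIcc : Set.Icc am ap ⊆ Set.Icc (-(2 * C₀)) (2 * C₀))
    (Y : ℝ → ℝ → ℝ)
    (hY0 : ∀ ξ ∈ Set.Icc (-(2 * C₀)) (2 * C₀), Y 0 ξ = ξ)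
    (hYode : ∀ ξ ∈ Set.Icc (-(2 * C₀)) (2 * C₀), ∀ τ ≥ (0 : ℝ),
      HasDerivAt (fun s => Y s ξ) (f (Y τ ξ)) τ) :
    ∀ α > (0 : ℝ), ∀ κ > (0 : ℝ), ∃ C₁ > (0 : ℝ), ∃ ε₀ > (0 : ℝ),
      ∀ ε ∈ Set.Ioo (0 : ℝ) ε₀, ∀ ξ ∈ Set.Icc (-(2 * C₀)) (a0 - ε ^ α),
        |Y (C₁ * |Real.log ε|) ξ - am| ≤ ε ^ κ := by
  intro α hα κ hκ
  obtain ⟨ρ₀, ρ₁, m, hρ₀, hρ₁, hm, hρ₀1, hρ₁1, hgap, hf₀, hmid, hf₁⟩ :=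
    exists_rates_of_bistable (hf.of_le (by norm_num)) h1 ((hzeros am).2 (by simp))
      ((hzeros a0).2 (by simp))
      (fun u hu h0 => by rcases (hzeros u).1 h0 with rfl | rfl | rfl <;> linarith [hu.1, hu.2])
      (half_pos hμ) (show μ / 2 < deriv f a0 by linarith) (show deriv f am < -(p / 2) by linarith)
  obtain ⟨h2C₀am, -⟩ := hIcc ⟨le_rfl, (h1.trans h2).le⟩
  obtain ⟨-, hap2C₀⟩ := hIcc ⟨(h1.trans h2).le, le_rfl⟩
  set K := am + 2 * C₀ + 1
  have hlogK : 0 ≤ log K := log_nonneg (by linarith)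
  have ha0am : 0 < a0 - am := by linarith
  obtain ⟨ε₀, hε₀, hε₀L⟩ := exists_pos_forall_Ioo_eq_exp_neg (max 1 (-log ρ₀ / α))
  refine ⟨2 * α / (μ / 2) + 2 * (a0 - am) / m + 2 * κ / (p / 2) + 2 * (κ + log K) / p,
    by positivity, ε₀, hε₀, fun ε hε ξ hξ => ?_⟩
  obtain ⟨L, hL, rfl⟩ := hε₀L ε hε
  have hL₁ : 1 ≤ L := (le_max_left _ _).trans hL.le
  have hpow (s : ℝ) : exp (-L) ^ s = exp (-(s * L)) := by rw [← exp_mul]; ring_nf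
  rw [hpow] at hξ ⊢
  rw [log_exp, abs_neg, abs_of_nonneg (show 0 ≤ L by linarith)]
  have hξ₂ : ξ ∈ Icc (-(2 * C₀)) (2 * C₀) := ⟨hξ.1, by linarith [hξ.2, exp_pos (-(α * L))]⟩
  exact abs_sub_le_exp_of_bistable (g := fun s => Y s ξ) (K := K) (half_pos hμ) (half_pos hp) hm hp
    hρ₀ hρ₁ (by linarith) hα.le hκ.le hρ₀1 hρ₁1 hgap hL₁
    ((div_le_iff₀' hα).1 ((le_max_right _ _).trans hL.le)) hf₀ hmid hf₁ hsubb (hYode ξ hξ₂)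
    (by rw [hY0 ξ hξ₂]; exact ⟨by linarith [hξ.1], hξ.2⟩) le_rfl

/-- Proposition 3.4: solutions of the ODE `dY/dτ = f(Y)` started in `[-2C₀, a₀ - ε^α]`
are `ε^κ`-close to `a₋` at time `C₁ |log ε|`. -/
theorem stmt_3
    (f : ℝ → ℝ) (hf : ContDiff ℝ 2 f)
    (p μ c C q : ℝ) (hp : 0 < p) (hμ : 0 < μ) (hc : 0 < c) (hCpos : 0 < C) (hq : 0 < q)
    (am a0 ap : ℝ) (h1 : am < a0) (h2 : a0 < ap)
    (hzeros : ∀ u, f u = 0 ↔ u = am ∨ u = a0 ∨ u = ap)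
    (hfam : deriv f am = -p) (hfap : deriv f ap = -p) (hfa0 : deriv f a0 = μ)
    (hgrowth : ∀ u : ℝ, f u ≤ C * (1 + |u| ^ q))
    (hfc : ∀ u, deriv f u ≤ c)
    (hsupp : ∀ u, ap ≤ u → f u ≤ -p * (u - ap))
    (hsubb : ∀ u, u ≤ am → -p * (u - am) ≤ f u)
    (C₀ : ℝ) (hC₀ : 1 < C₀) (hIcc : Set.Icc am ap ⊆ Set.Icc (-(2 * C₀)) (2 * C₀))
    (Y : ℝ → ℝ → ℝ)
    (hY0 : ∀ ξ ∈ Set.Icc (-(2 * C₀)) (2 * C₀), Y 0 ξ = ξ)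
    (hYode : ∀ ξ ∈ Set.Icc (-(2 * C₀)) (2 * C₀), ∀ τ ≥ (0 : ℝ),
      HasDerivAt (fun s => Y s ξ) (f (Y τ ξ)) τ) :
    ∀ α > (0 : ℝ), ∀ κ > (0 : ℝ), ∃ C₁ > (0 : ℝ), ∃ ε₀ > (0 : ℝ),
      ∀ ε ∈ Set.Ioo (0 : ℝ) ε₀, ∀ ξ ∈ Set.Icc (-(2 * C₀)) (a0 - ε ^ α),
        |Y (C₁ * |Real.log ε|) ξ - am| ≤ ε ^ κ :=
  stmt_3_general f hf p μ hp hμ am a0 ap h1 h2 hzeros hfam hfa0 hsubb C₀ hIcc Y hY0 hYode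
end
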